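/- Total Laplacian spectra of cubes: For all n ≥ 1 and 0 ≤ k ≤ n, the characteristic polynomial of the total Laplacian L^tot_k of the full cube Q_n (taking X = Q_n, all faces) equals ∏_{i=0}^{n−k} (y − (2k + 2i))^{binom(n,k) · binom(n−k,i)}. In particular all eigenvalues of L^tot_k(Q_n) are even integers, so cubes and their skeletons are Laplacian integral. -/

import Mathlib

open BigOperators Matrix

namespace CubicalPaper

/-- Faces of the `n`-cube `Q_n`: tuples in `{0, 1, ✱}ⁿ`, with `2 : Fin 3` playing the
role of `✱`. -/
abbrev Face (n : ℕ) : Type := Fin n → Fin 3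

/-- The direction set of a face: the coordinates equal to `✱`. -/
def dir {n : ℕ} (f : Face n) : Finset (Fin n) := Finset.univ.filter fun i => f i = 2

/-- The dimension of a face. -/
def fdim {n : ℕ} (f : Face n) : ℕ := (dir f).card

/-- The partial order on `Q_n`: `f ≤ g` iff `f i = g i` whenever `g i ≠ ✱`. -/
def cubeLE {n : ℕ} (f g : Face n) : Prop := ∀ i, g i ≠ 2 → f i = g i

/-- A proper cubical complex: a downward-closed set of faces of `Q_n`. -/
def IsComplex {n : ℕ} (X : Finset (Face n)) : Prop :=
  ∀ g ∈ X, ∀ f, cubeLE f g → f ∈ X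

/-- The incidence sign `ε(f, g)`: if `dir g = {a_1 < ⋯ < a_i}` and `f` is obtained from
`g` by changing the entry `g (a_j) = ✱` to `0` (resp. `1`), then `ε(f,g) = (-1)^j`
(resp. `(-1)^(j+1)`); in all other cases `ε(f,g) = 0`. -/
def eps {n : ℕ} (f g : Face n) : ℤ :=
  ∑ a : Fin n,
    if g a = 2 ∧ f a ≠ 2 ∧ ∀ b, b ≠ a → f b = g b then
      (-1 : ℤ) ^ ((Finset.univ.filter fun b => g b = 2 ∧ b ≤ a).card +
        if f a = 1 then 1 else 0)
    else 0

/-- The `k`-dimensional faces of `X`. -/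
def faceSet {n : ℕ} (X : Finset (Face n)) (k : ℕ) : Finset (Face n) :=
  X.filter fun f => fdim f = k

/-- The real cubical boundary matrix `∂_{k+1}` of `X`, with rows indexed by `X_k`
and columns by `X_{k+1}`, entries `ε(f, g)`. -/
def bdryM {n : ℕ} (X : Finset (Face n)) (k : ℕ) :
    Matrix {f // f ∈ faceSet X k} {g // g ∈ faceSet X (k + 1)} ℝ :=
  Matrix.of fun f g => (eps f.1 g.1 : ℝ)

/-- The up-down Laplacian `L^ud_k = ∂_{k+1} ∂_{k+1}^T`. -/
noncomputable def Lud {n : ℕ} (X : Finset (Face n)) (k : ℕ) :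
    Matrix {f // f ∈ faceSet X k} {f // f ∈ faceSet X k} ℝ :=
  bdryM X k * (bdryM X k)ᵀ

/-- The down-up Laplacian `L^du_k = ∂_k^T ∂_k` (with `∂_0 = 0`). -/
noncomputable def Ldu {n : ℕ} (X : Finset (Face n)) :
    (k : ℕ) → Matrix {f // f ∈ faceSet X k} {f // f ∈ faceSet X k} ℝ
  | 0 => 0
  | (j + 1) => (bdryM X j)ᵀ * bdryM X j

/-- The total Laplacian `L^tot_k = L^ud_k + L^du_k`. -/
noncomputable def Ltot {n : ℕ} (X : Finset (Face n)) (k : ℕ) :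
    Matrix {f // f ∈ faceSet X k} {f // f ∈ faceSet X k} ℝ :=
  Lud X k + Ldu X k

/-- The spectrum `s^tot_k(X)` of `L^tot_k`: the multiset of roots of its characteristic
polynomial (all of which are real, `L^tot_k` being real symmetric). -/
noncomputable def stot {n : ℕ} (X : Finset (Face n)) (k : ℕ) : Multiset ℝ :=
  (Ltot X k).charpoly.roots

/-- The spectrum `s^ud_k(X)` of `L^ud_k`. -/
noncomputable def sud {n : ℕ} (X : Finset (Face n)) (k : ℕ) : Multiset ℝ :=
  (Lud X k).charpoly.roots

/-!
The cubical chain complex of `Q_n` is the `n`-fold tensor power of the chain complex of the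
interval `{0, 1, ✱}`, whose boundary is `δ = intervalBoundary`. Filling the star at coordinate
`a` is `σ ⊗ ⋯ ⊗ σ ⊗ δ ⊗ 1 ⊗ ⋯ ⊗ 1`, the Koszul signs `σ = starSign` on the coordinates before `a`
producing the sign of `eps`. These pieces anticommute pairwise, so `∂∂ᵀ + ∂ᵀ∂` on all faces is
the Kronecker sum of `n` copies of the interval Laplacian `δδᵀ + δᵀδ`, and since `eps` only links
faces of consecutive dimensions, `L^tot_k` is its restriction to the `k`-faces. The interval
Laplacian has eigenvalues `0, 2, 2` on the columns `0, 1, ✱` of `intervalEigenbasis`, so the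
`n`-th tensor power of that basis diagonalises the Kronecker sum with eigenvalue
`2 (dim g + #ones g)` at the face `g`. It never mixes `✱` with `0, 1`, hence restricts to the
`k`-faces, of which `C(n,k) C(n-k,i)` have `i` ones.
-/

end CubicalPaper

namespace Matrix

open Finset Function

variable {ι α R : Type*} [Fintype ι] [CommRing R]

def piKronecker (M : ι → Matrix α α R) : Matrix (ι → α) (ι → α) R :=
  of fun f g => ∏ i, M i (f i) (g i)

@[simp]
theorem piKronecker_apply (M : ι → Matrix α α R) (f g : ι → α) :
    piKronecker M f g = ∏ i, M i (f i) (g i) := rfl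

theorem transpose_piKronecker (M : ι → Matrix α α R) :
    (piKronecker M)ᵀ = piKronecker fun i => (M i)ᵀ := by
  ext f g
  simp

theorem piKronecker_diagonal [DecidableEq α] (d : ι → α → R) :
    piKronecker (fun i => diagonal (d i)) = diagonal fun g => ∏ i, d i (g i) := by
  ext f g
  by_cases hfg : f = g
  · subst hfg
    simp
  · obtain ⟨i, hi⟩ := Function.ne_iff.1 hfg
    rw [diagonal_apply_ne _ hfg, piKronecker_apply]
    exact prod_eq_zero (mem_univ i) (diagonal_apply_ne _ hi)

section

variable [DecidableEq ι]

theorem piKronecker_mul_piKronecker [Fintype α] (M N : ι → Matrix α α R) :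
    piKronecker M * piKronecker N = piKronecker (M * N) := by
  ext f g
  simp only [mul_apply, piKronecker_apply, Pi.mul_apply, Fintype.prod_sum, prod_mul_distrib]

theorem piKronecker_update_apply (M : ι → Matrix α α R) (a : ι) (A : Matrix α α R)
    (f g : ι → α) :
    piKronecker (update M a A) f g = A (f a) (g a) * ∏ i ∈ univ.erase a, M i (f i) (g i) := by
  rw [piKronecker_apply, ← mul_prod_erase _ _ (mem_univ a), update_self]
  congr 1
  exact prod_congr rfl fun i hi => by rw [update_of_ne (ne_of_mem_erase hi)]

theorem piKronecker_update_add (M : ι → Matrix α α R) (a : ι) (A B : Matrix α α R) :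
    piKronecker (update M a (A + B)) =
      piKronecker (update M a A) + piKronecker (update M a B) := by
  ext f g
  simp only [Matrix.add_apply, piKronecker_update_apply, add_mul]

theorem piKronecker_eq_neg_piKronecker {M N : ι → Matrix α α R} (a : ι)
    (h : ∀ i ≠ a, M i = N i) (ha : M a = -N a) : piKronecker M = -piKronecker N := by
  ext f g
  rw [neg_apply, ← update_eq_self a M, ← update_eq_self a N, piKronecker_update_apply,
    piKronecker_update_apply, ha, neg_apply, neg_mul,
    prod_congr rfl fun i hi => by rw [h i (ne_of_mem_erase hi)]]

theorem piKronecker_update_one_diagonal [DecidableEq α] (a : ι) (d : α → R) :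
    piKronecker (update (1 : ι → Matrix α α R) a (diagonal d)) = diagonal fun g => d (g a) := by
  have h : update (1 : ι → Matrix α α R) a (diagonal d) =
      fun i => diagonal (update (1 : ι → α → R) a d i) := by
    funext i
    rcases eq_or_ne i a with rfl | hi
    · simp
    · simp [update_of_ne hi]
  rw [h, piKronecker_diagonal]
  congr 1
  funext g
  rw [← mul_prod_erase _ _ (mem_univ a), update_self,
    prod_eq_one fun i hi => by simp [update_of_ne (ne_of_mem_erase hi)], mul_one]

def kroneckerSum [DecidableEq α] (L : Matrix α α R) : Matrix (ι → α) (ι → α) R :=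
  ∑ a, piKronecker (update 1 a L)

theorem kroneckerSum_mul_piKronecker [Fintype α] [DecidableEq α] {L P : Matrix α α R}
    {d : α → R} (h : L * P = P * diagonal d) :
    kroneckerSum L * piKronecker (fun _ : ι => P) =
      piKronecker (fun _ => P) * diagonal fun g => ∑ a, d (g a) := by
  have hslot (a : ι) :
      piKronecker (update (1 : ι → Matrix α α R) a L) * piKronecker (fun _ => P) =
        piKronecker (fun _ => P) * piKronecker (update 1 a (diagonal d)) := by
    rw [piKronecker_mul_piKronecker, piKronecker_mul_piKronecker]
    congr 1
    funext i
    rcases eq_or_ne i a with rfl | hi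
    · simp [h]
    · simp [update_of_ne hi]
  simp_rw [kroneckerSum, sum_mul, hslot, ← mul_sum, piKronecker_update_one_diagonal]
  congr 1
  ext f g
  rw [Matrix.sum_apply]
  by_cases hfg : f = g <;> simp [hfg]

end

-- Without the type ascriptions, `*` elaborates to the multiplication of `CStarMatrix`.
theorem submatrix_mul_of_forall_notMem {l m o m' o' : Type*} [Fintype l] (s : Finset l)
    (A : Matrix m l R) (B : Matrix l o R) (e₁ : m' → m) (e₃ : o' → o)
    (h : ∀ i j x, x ∉ s → A (e₁ i) x * B x (e₃ j) = 0) :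
    (A * B).submatrix e₁ e₃ =
      (A.submatrix e₁ Subtype.val : Matrix m' s R) *
        (B.submatrix Subtype.val e₃ : Matrix s o' R) := by
  ext i j
  rw [submatrix_apply, mul_apply, mul_apply,
    ← sum_subset (subset_univ s) fun x _ hx => h i j x hx]
  exact (sum_coe_sort s _).symm

theorem charpoly_eq_prod_of_mul_eq_mul_diagonal [Fintype α] [DecidableEq α]
    {L P : Matrix α α R} {d : α → R} (hP : IsUnit P) (h : L * P = P * diagonal d) :
    L.charpoly = ∏ i, (Polynomial.X - Polynomial.C (d i)) := by
  obtain ⟨U, rfl⟩ := hP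
  have hL : L = U.val * diagonal d * U.val⁻¹ := by
    rw [← h, Matrix.mul_assoc, mul_nonsing_inv _ ((isUnit_iff_isUnit_det _).1 U.isUnit),
      Matrix.mul_one]
  rw [hL, charpoly_units_conj, charpoly_diagonal]

theorem isUnit_of_mul_self_eq_diagonal {K : Type*} [Field K] [Fintype α] [DecidableEq α]
    {P : Matrix α α K} {w : α → K} (hw : ∀ i, w i ≠ 0) (h : P * P = diagonal w) :
    IsUnit P := by
  refine (isUnit_iff_isUnit_det P).2 (isUnit_det_of_right_inverse (B := P * diagonal w⁻¹) ?_)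
  rw [← Matrix.mul_assoc, h, diagonal_mul_diagonal, ← diagonal_one]
  exact congrArg diagonal (funext fun i => mul_inv_cancel₀ (hw i))

end Matrix

namespace CubicalPaper

open Finset Function

def starSign : Matrix (Fin 3) (Fin 3) ℝ := diagonal ![1, 1, -1]

def intervalBoundary : Matrix (Fin 3) (Fin 3) ℝ := !![0, 0, -1; 0, 0, 1; 0, 0, 0]

def intervalLaplacian : Matrix (Fin 3) (Fin 3) ℝ := !![1, -1, 0; -1, 1, 0; 0, 0, 2]

def intervalEigenbasis : Matrix (Fin 3) (Fin 3) ℝ := !![1, 1, 0; 1, -1, 0; 0, 0, 1]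

def intervalEigenvalues : Fin 3 → ℝ := ![0, 2, 2]

theorem starSign_transpose : starSignᵀ = starSign := diagonal_transpose _

theorem starSign_mul_self : starSign * starSign = 1 := by
  ext i j
  fin_cases i <;> fin_cases j <;> simp [starSign]

theorem intervalBoundary_mul_starSign :
    intervalBoundary * starSign = -(starSign * intervalBoundary) := by
  ext i j
  fin_cases i <;> fin_cases j <;> simp [starSign, intervalBoundary]

theorem intervalBoundary_laplacian_eq :
    intervalBoundary * intervalBoundaryᵀ + intervalBoundaryᵀ * intervalBoundary =
      intervalLaplacian := by
  rw [intervalBoundary, intervalLaplacian]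
  ext i j
  fin_cases i <;> fin_cases j <;>
    simp [mul_apply, Fin.sum_univ_three, one_add_one_eq_two, -cons_mul, -cons_vecMul]

theorem intervalLaplacian_mul_eigenbasis :
    intervalLaplacian * intervalEigenbasis =
      intervalEigenbasis * diagonal intervalEigenvalues := by
  rw [intervalLaplacian, intervalEigenbasis, intervalEigenvalues]
  ext i j
  fin_cases i <;> fin_cases j <;>
    simp [mul_apply, Fin.sum_univ_three, -cons_mul, -cons_vecMul] <;> norm_num

theorem intervalEigenbasis_mul_self :
    intervalEigenbasis * intervalEigenbasis = diagonal ![2, 2, 1] := by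
  rw [intervalEigenbasis]
  ext i j
  fin_cases i <;> fin_cases j <;>
    simp [mul_apply, Fin.sum_univ_three, one_add_one_eq_two, -cons_mul, -cons_vecMul]

theorem intervalBoundary_apply_eq_zero {u v : Fin 3} (h : ¬(v = 2 ∧ u ≠ 2)) :
    intervalBoundary u v = 0 := by
  fin_cases u <;> fin_cases v <;> simp_all [intervalBoundary]

theorem intervalEigenbasis_apply_eq_zero {u v : Fin 3} (h : ¬(u = 2 ↔ v = 2)) :
    intervalEigenbasis u v = 0 := by
  fin_cases u <;> fin_cases v <;> simp_all [intervalEigenbasis]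

def koszulFactor {n : ℕ} (a c : Fin n) : Matrix (Fin 3) (Fin 3) ℝ :=
  if c < a then starSign else if c = a then intervalBoundary else 1

def cubeBoundaryAt {n : ℕ} (a : Fin n) : Matrix (Face n) (Face n) ℝ :=
  piKronecker (koszulFactor a)

def cubeBoundary (n : ℕ) : Matrix (Face n) (Face n) ℝ := of fun f g => (eps f g : ℝ)

def cubeLaplacian (n : ℕ) : Matrix (Face n) (Face n) ℝ :=
  cubeBoundary n * (cubeBoundary n)ᵀ + (cubeBoundary n)ᵀ * cubeBoundary n

def cubeEigenbasis (n : ℕ) : Matrix (Face n) (Face n) ℝ :=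
  piKronecker fun _ : Fin n => intervalEigenbasis

variable {n : ℕ}

theorem koszulFactor_apply_of_ne {a c : Fin n} (hc : c ≠ a) {u v : Fin 3} (huv : u ≠ v) :
    koszulFactor a c u v = 0 := by
  unfold koszulFactor
  split_ifs
  · exact diagonal_apply_ne _ huv
  · exact one_apply_ne huv

theorem koszulFactor_apply_self {a c : Fin n} (u : Fin 3) (hc : c ≠ a) :
    koszulFactor a c u u = if u = 2 ∧ c < a then -1 else 1 := by
  unfold koszulFactor
  fin_cases u <;> split_ifs <;> simp_all [starSign]

theorem eps_eq_sum_cubeBoundaryAt (f g : Face n) :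
    (eps f g : ℝ) = ∑ a, cubeBoundaryAt a f g := by
  rw [eps, Int.cast_sum]
  refine sum_congr rfl fun a _ => ?_
  rw [cubeBoundaryAt, piKronecker_apply]
  by_cases hcov : g a = 2 ∧ f a ≠ 2 ∧ ∀ b, b ≠ a → f b = g b
  · obtain ⟨hga, hfa, hfg⟩ := hcov
    have hfactor (c : Fin n) : koszulFactor a c (f c) (g c) =
        (if g c = 2 ∧ c ≤ a then -1 else 1) *
          (if c = a then (if f a = 1 then -1 else 1) else 1) := by
      rcases eq_or_ne c a with rfl | hc
      · simp only [koszulFactor, lt_irrefl, if_true, hga, le_refl]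
        generalize f c = u at hfa ⊢
        fin_cases u <;> simp_all [intervalBoundary]
      · rw [hfg c hc, koszulFactor_apply_self _ hc, if_neg hc, mul_one]
        simp [hc, le_iff_lt_or_eq]
    rw [if_pos ⟨hga, hfa, hfg⟩, prod_congr rfl fun c _ => hfactor c, prod_mul_distrib,
      prod_ite_eq', if_pos (mem_univ a), prod_ite, prod_const, prod_const_one, mul_one]
    push_cast
    rw [pow_add]
    split_ifs <;> simp
  · rw [if_neg hcov, Int.cast_zero, eq_comm]
    by_cases hfg : ∀ b, b ≠ a → f b = g b
    · refine prod_eq_zero (mem_univ a) ?_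
      simp only [koszulFactor, lt_irrefl, if_true, if_false]
      exact intervalBoundary_apply_eq_zero fun h => hcov ⟨h.1, h.2, hfg⟩
    · push Not at hfg
      obtain ⟨b, hb, hfgb⟩ := hfg
      exact prod_eq_zero (mem_univ b) (koszulFactor_apply_of_ne hb hfgb)

theorem cubeBoundary_eq_sum : cubeBoundary n = ∑ a, cubeBoundaryAt a := by
  ext f g
  rw [Matrix.sum_apply, ← eps_eq_sum_cubeBoundaryAt]
  rfl

theorem cubeBoundaryAt_anticomm {a b : Fin n} (hab : a ≠ b) :
    cubeBoundaryAt a * (cubeBoundaryAt b)ᵀ + (cubeBoundaryAt b)ᵀ * cubeBoundaryAt a = 0 := by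
  wlog h : a < b generalizing a b
  · have hba := congrArg transpose (this hab.symm (lt_of_le_of_ne (not_lt.1 h) hab.symm))
    simpa only [transpose_add, transpose_mul, transpose_transpose, transpose_zero, add_comm]
      using hba
  rw [cubeBoundaryAt, cubeBoundaryAt, transpose_piKronecker, piKronecker_mul_piKronecker,
    piKronecker_mul_piKronecker, add_eq_zero_iff_eq_neg]
  refine piKronecker_eq_neg_piKronecker a (fun c hc => ?_) ?_
  · rcases lt_or_gt_of_ne hc with hca | hac
    · simp [koszulFactor, hca, hca.trans h, starSign_transpose]
    · simp [koszulFactor, not_lt.2 hac.le, hac.ne']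
  · simp [koszulFactor, h, intervalBoundary_mul_starSign, starSign_transpose]

theorem cubeBoundaryAt_laplacian (a : Fin n) :
    cubeBoundaryAt a * (cubeBoundaryAt a)ᵀ + (cubeBoundaryAt a)ᵀ * cubeBoundaryAt a =
      piKronecker (update 1 a intervalLaplacian) := by
  have hunit (c : Fin n) (hc : c ≠ a) :
      koszulFactor a c * (koszulFactor a c)ᵀ = 1 ∧
        (koszulFactor a c)ᵀ * koszulFactor a c = 1 := by
    unfold koszulFactor
    split_ifs <;> simp [starSign_transpose, starSign_mul_self]
  rw [cubeBoundaryAt, transpose_piKronecker, piKronecker_mul_piKronecker,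
    piKronecker_mul_piKronecker, ← intervalBoundary_laplacian_eq, piKronecker_update_add]
  congr 2 <;> funext c <;> rcases eq_or_ne c a with rfl | hc
  · simp [koszulFactor]
  · simp [update_of_ne hc, (hunit c hc).1]
  · simp [koszulFactor]
  · simp [update_of_ne hc, (hunit c hc).2]

theorem cubeLaplacian_eq_kroneckerSum : cubeLaplacian n = kroneckerSum intervalLaplacian := by
  calc cubeLaplacian n
      = ∑ a, ∑ b, (cubeBoundaryAt a * (cubeBoundaryAt b)ᵀ +
          (cubeBoundaryAt b)ᵀ * cubeBoundaryAt a) := by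
        rw [cubeLaplacian, cubeBoundary_eq_sum, transpose_sum, sum_mul_sum, sum_mul_sum,
          sum_comm (f := fun a b => (cubeBoundaryAt a)ᵀ * cubeBoundaryAt b)]
        simp only [sum_add_distrib]
    _ = ∑ a, (cubeBoundaryAt a * (cubeBoundaryAt a)ᵀ +
          (cubeBoundaryAt a)ᵀ * cubeBoundaryAt a) :=
        sum_congr rfl fun a _ =>
          sum_eq_single a (fun b _ hb => cubeBoundaryAt_anticomm hb.symm) (by simp)
    _ = kroneckerSum intervalLaplacian := by
        simp only [cubeBoundaryAt_laplacian, kroneckerSum]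

theorem mem_faceSet_univ {f : Face n} {k : ℕ} : f ∈ faceSet univ k ↔ fdim f = k := by
  simp [faceSet]

theorem fdim_eq_of_eps_ne_zero {f g : Face n} (h : eps f g ≠ 0) : fdim g = fdim f + 1 := by
  obtain ⟨a, -, ha⟩ := exists_ne_zero_of_sum_ne_zero h
  obtain ⟨hga, hfa, hfg⟩ : g a = 2 ∧ f a ≠ 2 ∧ ∀ b, b ≠ a → f b = g b := by
    by_contra hcov
    exact ha (if_neg hcov)
  have hdir : dir f = (dir g).erase a := by
    ext b
    rcases eq_or_ne b a with rfl | hb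
    · simp [dir, hfa]
    · simp [dir, hb, hfg b hb]
  rw [fdim, fdim, hdir, card_erase_add_one (by simp [dir, hga])]

theorem cubeBoundary_apply_eq_zero {f g : Face n} (h : fdim g ≠ fdim f + 1) :
    cubeBoundary n f g = 0 := by
  rw [cubeBoundary, of_apply, Int.cast_eq_zero]
  by_contra hne
  exact h (fdim_eq_of_eps_ne_zero hne)

theorem Ltot_univ_eq_submatrix (k : ℕ) :
    Ltot (univ : Finset (Face n)) k = (cubeLaplacian n).submatrix Subtype.val Subtype.val := by
  rw [cubeLaplacian, submatrix_add, Ltot]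
  congr 1
  · rw [submatrix_mul_of_forall_notMem (faceSet univ (k + 1))]
    · rfl
    · intro f _ x hx
      refine mul_eq_zero_of_left (cubeBoundary_apply_eq_zero fun h => hx ?_) _
      rw [mem_faceSet_univ, h, mem_faceSet_univ.1 f.2]
  · cases k with
    | zero =>
      ext f h
      refine (Fintype.sum_eq_zero _ fun x => mul_eq_zero_of_left ?_ _).symm
      exact cubeBoundary_apply_eq_zero (by rw [mem_faceSet_univ.1 f.2]; omega)
    | succ j =>
      rw [Ldu, submatrix_mul_of_forall_notMem (faceSet univ j)]
      · rfl
      · intro f _ x hx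
        refine mul_eq_zero_of_left (cubeBoundary_apply_eq_zero fun h => hx ?_) _
        rw [mem_faceSet_univ]
        have := mem_faceSet_univ.1 f.2
        omega

def onesSet (g : Face n) : Finset (Fin n) := univ.filter fun c => g c = 1

def faceOfSets (S T : Finset (Fin n)) : Face n :=
  fun c => if c ∈ S then 2 else if c ∈ T then 1 else 0

theorem dir_faceOfSets (S T : Finset (Fin n)) : dir (faceOfSets S T) = S := by
  ext c
  by_cases hS : c ∈ S <;> by_cases hT : c ∈ T <;> simp [dir, faceOfSets, hS, hT]

theorem onesSet_faceOfSets {S T : Finset (Fin n)} (hT : T ⊆ Sᶜ) :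
    onesSet (faceOfSets S T) = T := by
  ext c
  rw [onesSet, mem_filter, faceOfSets]
  by_cases hS : c ∈ S
  · have hcT : c ∉ T := fun h => mem_compl.1 (hT h) hS
    simp [hS, hcT]
  · by_cases hcT : c ∈ T <;> simp [hS, hcT]

theorem onesSet_subset_compl_dir (g : Face n) : onesSet g ⊆ (dir g)ᶜ := by
  intro c hc
  simp_all [onesSet, dir]

theorem faceOfSets_dir_onesSet (g : Face n) : faceOfSets (dir g) (onesSet g) = g := by
  funext c
  simp only [faceOfSets, dir, onesSet, mem_filter, mem_univ, true_and]
  split_ifs with h2 h1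
  · exact h2.symm
  · exact h1.symm
  · generalize g c = u at h1 h2
    fin_cases u <;> simp_all

theorem card_filter_dir_eq_and_card_onesSet_eq (S : Finset (Fin n)) (i : ℕ) :
    #{g : Face n | dir g = S ∧ #(onesSet g) = i} = (n - #S).choose i := by
  have hcompl : n - #S = #Sᶜ := by rw [card_compl, Fintype.card_fin]
  rw [hcompl, ← card_powersetCard]
  refine card_nbij' onesSet (faceOfSets S) (fun g hg => ?_) (fun T hT => ?_) (fun g hg => ?_)
    (fun T hT => onesSet_faceOfSets (mem_powersetCard.1 hT).1)
  · obtain ⟨rfl, hi⟩ := (mem_filter.1 hg).2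
    exact mem_powersetCard.2 ⟨onesSet_subset_compl_dir g, hi⟩
  · obtain ⟨hTS, hTi⟩ := mem_powersetCard.1 hT
    exact mem_filter.2 ⟨mem_univ _, dir_faceOfSets S T, by rw [onesSet_faceOfSets hTS, hTi]⟩
  · obtain ⟨rfl, -⟩ := (mem_filter.1 hg).2
    exact faceOfSets_dir_onesSet g

theorem card_filter_faceSet_card_onesSet_eq (k i : ℕ) :
    #{g ∈ faceSet (univ : Finset (Face n)) k | #(onesSet g) = i} =
      n.choose k * (n - k).choose i := by
  rw [card_eq_sum_card_fiberwise (f := dir) (t := powersetCard k univ),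
    sum_congr rfl fun S hS => ?_, sum_const, card_powersetCard, card_univ, Fintype.card_fin,
    smul_eq_mul]
  · rw [← (mem_powersetCard.1 hS).2, ← card_filter_dir_eq_and_card_onesSet_eq]
    congr 1
    ext g
    simp only [mem_filter, mem_univ, true_and, mem_faceSet_univ, fdim]
    constructor
    · exact fun ⟨⟨_, hi⟩, hg⟩ => ⟨hg, hi⟩
    · rintro ⟨rfl, hi⟩
      exact ⟨⟨rfl, hi⟩, rfl⟩
  · intro g hg
    exact mem_powersetCard.2 ⟨subset_univ _, mem_faceSet_univ.1 (mem_filter.1 hg).1⟩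

theorem card_onesSet_le (g : Face n) : #(onesSet g) ≤ n - fdim g := by
  have := card_le_card (onesSet_subset_compl_dir g)
  rwa [card_compl, Fintype.card_fin] at this

theorem prod_faceSet_univ_card_onesSet {M : Type*} [CommMonoid M] (k : ℕ) (φ : ℕ → M) :
    ∏ g ∈ faceSet (univ : Finset (Face n)) k, φ #(onesSet g) =
      ∏ i ∈ range (n - k + 1), φ i ^ (n.choose k * (n - k).choose i) := by
  rw [← prod_fiberwise_of_maps_to' (t := range (n - k + 1)) fun g hg => ?_]
  · simp_rw [prod_const, card_filter_faceSet_card_onesSet_eq]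
  · rw [mem_range, ← mem_faceSet_univ.1 hg]
    exact Nat.lt_succ_of_le (card_onesSet_le g)

theorem cubeEigenbasis_apply_eq_zero {f g : Face n} (h : fdim f ≠ fdim g) :
    cubeEigenbasis n f g = 0 := by
  obtain ⟨c, hc⟩ : ∃ c, ¬(f c = 2 ↔ g c = 2) := by
    by_contra! hall
    exact h (by rw [fdim, fdim, dir, dir, filter_congr fun c _ => hall c])
  exact prod_eq_zero (mem_univ c) (intervalEigenbasis_apply_eq_zero hc)

theorem cubeEigenbasis_apply_eq_zero_of_mem_of_notMem {f g : Face n} {k : ℕ}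
    (hf : f ∈ faceSet univ k) (hg : g ∉ faceSet univ k) :
    cubeEigenbasis n f g = 0 ∧ cubeEigenbasis n g f = 0 := by
  have hfg : fdim f ≠ fdim g := by
    rw [mem_faceSet_univ.1 hf]
    exact fun h => hg (mem_faceSet_univ.2 h.symm)
  exact ⟨cubeEigenbasis_apply_eq_zero hfg, cubeEigenbasis_apply_eq_zero hfg.symm⟩

theorem sum_intervalEigenvalues (g : Face n) :
    ∑ c, intervalEigenvalues (g c) = ((2 * fdim g + 2 * #(onesSet g) : ℕ) : ℝ) := by
  have h (u : Fin 3) :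
      intervalEigenvalues u = 2 * (if u = 2 then 1 else 0) + 2 * (if u = 1 then 1 else 0) := by
    fin_cases u <;> simp [intervalEigenvalues]
  simp only [h, sum_add_distrib, ← mul_sum, sum_boole, fdim, dir, onesSet]
  push_cast
  ring

def faceEigenbasis (n k : ℕ) :
    Matrix {f // f ∈ faceSet (univ : Finset (Face n)) k}
      {f // f ∈ faceSet (univ : Finset (Face n)) k} ℝ :=
  (cubeEigenbasis n).submatrix Subtype.val Subtype.val

theorem Ltot_univ_mul_faceEigenbasis (k : ℕ) :
    Ltot univ k * faceEigenbasis n k =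
      faceEigenbasis n k * diagonal fun g => ((2 * k + 2 * #(onesSet g.1) : ℕ) : ℝ) := by
  calc Ltot univ k * faceEigenbasis n k
      = (cubeLaplacian n * cubeEigenbasis n).submatrix Subtype.val Subtype.val := by
        rw [submatrix_mul_of_forall_notMem (faceSet univ k), Ltot_univ_eq_submatrix]
        · rfl
        · exact fun _ g _ hx =>
            mul_eq_zero_of_right _ (cubeEigenbasis_apply_eq_zero_of_mem_of_notMem g.2 hx).2
    _ = (cubeEigenbasis n * diagonal fun g : Face n => ∑ c, intervalEigenvalues (g c)).submatrix
          Subtype.val Subtype.val := by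
        rw [cubeLaplacian_eq_kroneckerSum, cubeEigenbasis,
          kroneckerSum_mul_piKronecker intervalLaplacian_mul_eigenbasis]
    _ = faceEigenbasis n k * diagonal fun g => ((2 * k + 2 * #(onesSet g.1) : ℕ) : ℝ) := by
        rw [submatrix_mul_of_forall_notMem (faceSet univ k),
          submatrix_diagonal _ _ Subtype.val_injective]
        · congr 2
          funext g
          rw [Function.comp_apply, sum_intervalEigenvalues, mem_faceSet_univ.1 g.2]
        · exact fun f _ _ hx =>
            mul_eq_zero_of_left (cubeEigenbasis_apply_eq_zero_of_mem_of_notMem f.2 hx).1 _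

theorem faceEigenbasis_mul_self (k : ℕ) :
    faceEigenbasis n k * faceEigenbasis n k =
      diagonal fun g => ∏ c, (![2, 2, 1] : Fin 3 → ℝ) (g.1 c) := by
  rw [faceEigenbasis, ← submatrix_mul_of_forall_notMem (faceSet univ k), cubeEigenbasis,
    piKronecker_mul_piKronecker, Pi.mul_def]
  · simp only [intervalEigenbasis_mul_self, piKronecker_diagonal]
    exact submatrix_diagonal _ _ Subtype.val_injective
  · exact fun f _ _ hx =>
      mul_eq_zero_of_left (cubeEigenbasis_apply_eq_zero_of_mem_of_notMem f.2 hx).1 _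

theorem isUnit_faceEigenbasis (k : ℕ) : IsUnit (faceEigenbasis n k) :=
  isUnit_of_mul_self_eq_diagonal
    (fun g => prod_ne_zero_iff.2 fun c _ => by generalize g.1 c = u; fin_cases u <;> norm_num)
    (faceEigenbasis_mul_self k)

theorem cube_total_spectrum_general (n k : ℕ) :
    (Ltot (Finset.univ : Finset (Face n)) k).charpoly =
      ∏ i ∈ Finset.range (n - k + 1),
        (Polynomial.X - Polynomial.C ((2 * k + 2 * i : ℕ) : ℝ)) ^
          (n.choose k * (n - k).choose i) := by
  rw [charpoly_eq_prod_of_mul_eq_mul_diagonal (isUnit_faceEigenbasis k)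
      (Ltot_univ_mul_faceEigenbasis k),
    prod_coe_sort (faceSet univ k)
      fun g => Polynomial.X - Polynomial.C ((2 * k + 2 * #(onesSet g) : ℕ) : ℝ)]
  exact prod_faceSet_univ_card_onesSet k
    fun i => Polynomial.X - Polynomial.C ((2 * k + 2 * i : ℕ) : ℝ)

/-- **Total Laplacian spectra of cubes** (Duval–Klivans–Martin, Thm. 3.4, first
formula).  For `n ≥ 1` and `0 ≤ k ≤ n`, the characteristic polynomial of the total
Laplacian `L^tot_k` of the full cube `Q_n` equals
`∏_{i=0}^{n-k} (y - (2k + 2i))^{binom(n,k)·binom(n-k,i)}`.  In particular all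
eigenvalues are even integers, so cubes and their skeletons are Laplacian integral. -/
theorem cube_total_spectrum (n k : ℕ) (hn : 1 ≤ n) (hk : k ≤ n) :
    (Ltot (Finset.univ : Finset (Face n)) k).charpoly =
      ∏ i ∈ Finset.range (n - k + 1),
        (Polynomial.X - Polynomial.C ((2 * k + 2 * i : ℕ) : ℝ)) ^
          (n.choose k * (n - k).choose i) :=
  cube_total_spectrum_general n k

end CubicalPaper
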